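/- Let A₁ and A₂ be disjoint HO sets in G such that A₁ ∪ A₂ is NO in G. Then for any pattern p, N(G*)p = 𝟏 if and only if either (N(G)p = 𝟏 with x_{A₁}·p = x_{A₂}·p = 0) or (N(G)p = x̄_{A₁∪A₂} with x_{A₁}·p = x_{A₂}·p = 1). Moreover, A₁ and A₂ are HO in G*, and ν(G*) = ν(G). -/

import Mathlib

open Matrix
open scoped Classical

/-- The closed neighborhood matrix of a simple graph over `ℤ₂`:
`N(G) u v = 1` iff `u = v` or `u` is adjacent to `v`. -/
noncomputable def nbhdMatrix {V : Type*} [Fintype V] (G : SimpleGraph V) :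
    Matrix V V (ZMod 2) :=
  Matrix.of fun u v => if u = v ∨ G.Adj u v then 1 else 0

/-- The nullity of a matrix over `ℤ₂`: the dimension of its kernel. -/
noncomputable def nullityM {V : Type*} [Fintype V] (M : Matrix V V (ZMod 2)) : ℕ :=
  Module.finrank (ZMod 2) (LinearMap.ker M.mulVecLin)

/-- The nullity `ν(G)` of a graph. -/
noncomputable def graphNullity {V : Type*} [Fintype V] (G : SimpleGraph V) : ℕ :=
  nullityM (nbhdMatrix G)

/-- Characteristic vector of a set of vertices. -/
noncomputable def chi {V : Type*} (A : Set V) : V → ZMod 2 :=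
  fun v => if v ∈ A then 1 else 0

/-- A configuration `c` is solvable (w.r.t. the matrix `M`) if `M p = c` for some pattern `p`. -/
def Solv {V : Type*} [Fintype V] (M : Matrix V V (ZMod 2)) (c : V → ZMod 2) : Prop :=
  ∃ p : V → ZMod 2, M.mulVec p = c

/-- `A` is `c`-always odd activated: `A` is solvable and `x_A · p = 1` for every solving
pattern `p` for `c`. -/
def cAO {V : Type*} [Fintype V] (M : Matrix V V (ZMod 2)) (c : V → ZMod 2)
    (A : Set V) : Prop :=
  Solv M (chi A) ∧ ∀ p : V → ZMod 2, M.mulVec p = c → chi A ⬝ᵥ p = 1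

/-- `A` is `c`-never odd activated: `A` is solvable and `x_A · p = 0` for every solving
pattern `p` for `c`. -/
def cNO {V : Type*} [Fintype V] (M : Matrix V V (ZMod 2)) (c : V → ZMod 2)
    (A : Set V) : Prop :=
  Solv M (chi A) ∧ ∀ p : V → ZMod 2, M.mulVec p = c → chi A ⬝ᵥ p = 0

/-- `A` is always odd activated (AO): `𝟏`-always odd activated. -/
def AO {V : Type*} [Fintype V] (M : Matrix V V (ZMod 2)) (A : Set V) : Prop :=
  cAO M 1 A

/-- `A` is never odd activated (NO): `𝟏`-never odd activated. -/
def NO {V : Type*} [Fintype V] (M : Matrix V V (ZMod 2)) (A : Set V) : Prop :=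
  cNO M 1 A

/-- `A` is half odd activated (HO): `x_A` is not solvable. -/
def HO {V : Type*} [Fintype V] (M : Matrix V V (ZMod 2)) (A : Set V) : Prop :=
  ¬ Solv M (chi A)

/-- The closed neighborhood matrix of the graph `G*` obtained from `G` by toggling every
pair of vertices between the disjoint sets `A₁` and `A₂`:
`N(G*) = N(G) + x_{A₁} x_{A₂}ᵗ + x_{A₂} x_{A₁}ᵗ` over `ℤ₂`. -/
noncomputable def starMatrix {V : Type*} [Fintype V] (G : SimpleGraph V)
    (A₁ A₂ : Set V) : Matrix V V (ZMod 2) :=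
  nbhdMatrix G + Matrix.vecMulVec (chi A₁) (chi A₂) + Matrix.vecMulVec (chi A₂) (chi A₁)

/-!
Write `a, b` for the characteristic vectors of `A₁, A₂`, so that
`N(G*) p = N p + (b·p) a + (a·p) b`. Since `N` is symmetric with unit diagonal, `p · N p = 𝟏 · p`
over `ℤ₂`; hence `𝟏` is solvable, and a configuration is solvable iff it is orthogonal to `ker N`.
So an HO set is detected by a kernel vector, and the NO hypothesis forces `a·p = b·p` both for
`p ∈ ker N` and for every solution of `N p = a + b`. Splitting `N(G*) p = 𝟏` according to the
values of `a·p, b·p` gives the description of the odd dominating patterns of `G*`. For the rest,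
choose `w` with `N w = a + b` and `a·w = b·w = 0`: the involution `p ↦ p + (a·p) w` turns `N(G*)`
into `N + a (a + b)ᵀ`, whose kernel is `ker N` and for which `a` is still not solvable.
-/

theorem Matrix.mem_range_mulVecLin_iff {m n K : Type*} [Fintype m] [Fintype n] [DecidableEq m]
    [Field K] (M : Matrix m n K) (c : m → K) :
    c ∈ LinearMap.range M.mulVecLin ↔ ∀ k, Mᵀ *ᵥ k = 0 → c ⬝ᵥ k = 0 := by
  constructor
  · rintro ⟨p, rfl⟩ k hk
    rw [mulVecLin_apply, dotProduct_comm, dotProduct_mulVec, ← mulVec_transpose, hk,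
      zero_dotProduct]
  · intro h
    rw [← Subspace.forall_mem_dualAnnihilator_apply_eq_zero_iff]
    intro φ hφ
    obtain ⟨k, rfl⟩ := (dotProductEquiv K m).surjective φ
    have hk : Mᵀ *ᵥ k = 0 := by
      refine dotProduct_eq_zero _ fun x => ?_
      rw [mulVec_transpose, ← dotProduct_mulVec]
      exact (Submodule.mem_dualAnnihilator _).1 hφ _ ⟨x, rfl⟩
    simpa [dotProduct_comm] using h k hk

lemma ZMod.two_cases : ∀ x : ZMod 2, x = 0 ∨ x = 1 := by decide

section Symmetric

variable {V : Type*} [Fintype V] {M : Matrix V V (ZMod 2)}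

lemma solv_iff_forall_dotProduct_eq_zero (hM : M.IsSymm) {c : V → ZMod 2} :
    Solv M c ↔ ∀ k, M *ᵥ k = 0 → c ⬝ᵥ k = 0 := by
  conv_rhs => rw [← hM]
  exact M.mem_range_mulVecLin_iff c

lemma exists_mulVec_eq_zero_dotProduct_eq_one (hM : M.IsSymm) {c : V → ZMod 2}
    (hc : ¬ Solv M c) : ∃ k, M *ᵥ k = 0 ∧ c ⬝ᵥ k = 1 := by
  rw [solv_iff_forall_dotProduct_eq_zero hM] at hc
  push Not at hc
  obtain ⟨k, hk, hck⟩ := hc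
  exact ⟨k, hk, (ZMod.two_cases _).resolve_left hck⟩

/-- Over `ℤ₂` the off-diagonal terms of a symmetric quadratic form cancel in pairs. -/
lemma dotProduct_mulVec_self (hM : M.IsSymm) (x : V → ZMod 2) :
    x ⬝ᵥ M *ᵥ x = M.diag ⬝ᵥ x := by
  induction x using Pi.single_induction with
  | zero => simp
  | add f g hf hg =>
    have hcross : g ⬝ᵥ M *ᵥ f = f ⬝ᵥ M *ᵥ g := by
      rw [dotProduct_mulVec, ← mulVec_transpose, hM, dotProduct_comm]
    rw [mulVec_add, dotProduct_add, add_dotProduct, add_dotProduct, hcross, hf, hg,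
      dotProduct_add, add_assoc, CharTwo.add_cancel_left]
  | single i m =>
    simp only [mulVec_single, op_smul_eq_smul, dotProduct_smul, single_dotProduct, col_apply,
      smul_eq_mul, dotProduct_single, diag_apply]
    rw [← mul_assoc, ← sq, ZMod.pow_card, mul_comm]

lemma solv_diag (hM : M.IsSymm) : Solv M M.diag :=
  (solv_iff_forall_dotProduct_eq_zero hM).2 fun k hk => by
    rw [← dotProduct_mulVec_self hM, hk, dotProduct_zero]

lemma dotProduct_eq_of_mulVec_eq_diag (hM : M.IsSymm) {c p r : V → ZMod 2}
    (hp : M *ᵥ p = c) (hr : M *ᵥ r = M.diag) : c ⬝ᵥ p = c ⬝ᵥ r := by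
  calc c ⬝ᵥ p = p ⬝ᵥ M *ᵥ p := by rw [hp, dotProduct_comm]
    _ = M *ᵥ r ⬝ᵥ p := by rw [dotProduct_mulVec_self hM, hr]
    _ = c ⬝ᵥ r := by rw [dotProduct_comm, dotProduct_mulVec, ← mulVec_transpose, hM, hp]

end Symmetric

namespace Matrix

variable {V R : Type*}

/-- `starMatrix G A₁ A₂` unfolds to `(nbhdMatrix G).toggle (chi A₁) (chi A₂)`. -/
def toggle [CommSemiring R] (M : Matrix V V R) (a b : V → R) : Matrix V V R :=
  M + vecMulVec a b + vecMulVec b a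

lemma toggle_comm [CommSemiring R] (M : Matrix V V R) (a b : V → R) :
    M.toggle a b = M.toggle b a :=
  add_right_comm _ _ _

lemma toggle_mulVec [Fintype V] [CommSemiring R] (M : Matrix V V R) (a b p : V → R) :
    M.toggle a b *ᵥ p = M *ᵥ p + (b ⬝ᵥ p) • a + (a ⬝ᵥ p) • b := by
  simp only [toggle, add_mulVec, vecMulVec_mulVec, op_smul_eq_smul]

end Matrix

section Toggle

variable {V : Type*} [Fintype V] {M : Matrix V V (ZMod 2)} {a b c w : V → ZMod 2}

lemma toggle_mulVec_eq_iff (hc : Solv M c) (ha : ¬ Solv M a) (hb : ¬ Solv M b)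
    (p : V → ZMod 2) :
    M.toggle a b *ᵥ p = c ↔ (M *ᵥ p = c ∧ a ⬝ᵥ p = 0 ∧ b ⬝ᵥ p = 0) ∨
      (M *ᵥ p = a + b + c ∧ a ⬝ᵥ p = 1 ∧ b ⬝ᵥ p = 1) := by
  have hsolv : ∀ x, M *ᵥ p + x = c → Solv M x := fun x h =>
    (Submodule.add_mem_iff_right _ (LinearMap.mem_range_self M.mulVecLin p)).1 (h ▸ hc)
  rw [toggle_mulVec]
  rcases ZMod.two_cases (a ⬝ᵥ p) with hap | hap <;>
    rcases ZMod.two_cases (b ⬝ᵥ p) with hbp | hbp <;>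
    simp only [hap, hbp, zero_smul, one_smul, add_zero, zero_ne_one, one_ne_zero, and_true,
      and_false, or_false, false_or]
  · exact iff_of_false (fun h => ha (hsolv a h)) id
  · exact iff_of_false (fun h => hb (hsolv b h)) id
  · rw [add_assoc, ← eq_sub_iff_add_eq, ZModModule.sub_eq_add, add_comm c]

noncomputable def shear (a w : V → ZMod 2) : (V → ZMod 2) →ₗ[ZMod 2] (V → ZMod 2) :=
  LinearMap.id + (dotProductEquiv (ZMod 2) V a).smulRight w

lemma shear_apply (p : V → ZMod 2) : shear a w p = p + (a ⬝ᵥ p) • w := rfl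

lemma shear_shear (hwa : a ⬝ᵥ w = 0) (p : V → ZMod 2) : shear a w (shear a w p) = p := by
  rw [shear_apply, shear_apply, dotProduct_add, dotProduct_smul, hwa, smul_zero, add_zero,
    add_assoc, ZModModule.add_self, add_zero]

lemma toggle_mulVec_shear (hw : M *ᵥ w = a + b) (hwa : a ⬝ᵥ w = 0) (hwb : b ⬝ᵥ w = 0)
    (p : V → ZMod 2) : M.toggle a b *ᵥ shear a w p = M *ᵥ p + ((a + b) ⬝ᵥ p) • a := by
  rw [toggle_mulVec, shear_apply, mulVec_add, mulVec_smul, hw, dotProduct_add, dotProduct_add,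
    dotProduct_smul, dotProduct_smul, hwa, hwb, smul_zero, add_zero, add_zero, add_dotProduct]
  linear_combination (norm := module) ZModModule.add_self ((a ⬝ᵥ p) • b)

lemma exists_mulVec_eq_add_dotProduct_eq_zero (hab : Solv M (a + b)) {k : V → ZMod 2}
    (hk : M *ᵥ k = 0) (hak : a ⬝ᵥ k = 1)
    (hsum : ∀ p, M *ᵥ p = a + b → (a + b) ⬝ᵥ p = 0) :
    ∃ w, M *ᵥ w = a + b ∧ a ⬝ᵥ w = 0 ∧ b ⬝ᵥ w = 0 := by
  obtain ⟨q, hq⟩ := hab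
  obtain ⟨w, hw, hwa⟩ : ∃ w, M *ᵥ w = a + b ∧ a ⬝ᵥ w = 0 := by
    rcases ZMod.two_cases (a ⬝ᵥ q) with h | h
    · exact ⟨q, hq, h⟩
    · exact ⟨q + k, by rw [mulVec_add, hq, hk, add_zero],
        by rw [dotProduct_add, h, hak, ZModModule.add_self]⟩
  refine ⟨w, hw, hwa, ?_⟩
  simpa only [add_dotProduct, hwa, zero_add] using hsum w hw

section Shear

variable (hker : ∀ k, M *ᵥ k = 0 → (a + b) ⬝ᵥ k = 0) (hw : M *ᵥ w = a + b)
  (hwa : a ⬝ᵥ w = 0) (hwb : b ⬝ᵥ w = 0)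
include hker hw hwa hwb

lemma toggle_mulVec_shear_eq_zero_iff (ha : ¬ Solv M a) (p : V → ZMod 2) :
    M.toggle a b *ᵥ shear a w p = 0 ↔ M *ᵥ p = 0 := by
  rw [toggle_mulVec_shear hw hwa hwb]
  refine ⟨fun h => ?_, fun h => by rw [h, hker p h, zero_smul, add_zero]⟩
  rcases ZMod.two_cases ((a + b) ⬝ᵥ p) with hp | hp
  · rwa [hp, zero_smul, add_zero] at h
  · rw [hp, one_smul, add_eq_zero_iff_eq_neg, ZModModule.neg_eq_self] at h
    exact absurd ⟨p, h⟩ ha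

lemma not_solv_toggle (ha : ¬ Solv M a) : ¬ Solv (M.toggle a b) a := by
  rintro ⟨q, hq⟩
  rw [← shear_shear hwa q, toggle_mulVec_shear hw hwa hwb] at hq
  rcases ZMod.two_cases ((a + b) ⬝ᵥ shear a w q) with hp | hp
  · rw [hp, zero_smul, add_zero] at hq
    exact ha ⟨_, hq⟩
  · rw [hp, one_smul, add_eq_right] at hq
    exact one_ne_zero (hp ▸ hker _ hq)

lemma nullityM_toggle (ha : ¬ Solv M a) : nullityM (M.toggle a b) = nullityM M := by
  let e := LinearEquiv.ofInvolutive (shear a w) (shear_shear hwa)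
  have hker_eq : LinearMap.ker (M.toggle a b).mulVecLin =
      (LinearMap.ker M.mulVecLin).comap (e : (V → ZMod 2) →ₗ[ZMod 2] V → ZMod 2) := by
    ext q
    have h := toggle_mulVec_shear_eq_zero_iff hker hw hwa hwb ha (shear a w q)
    rwa [shear_shear hwa] at h
  rw [nullityM, nullityM, hker_eq, Submodule.comap_equiv_eq_map_symm,
    LinearEquiv.finrank_map_eq]

end Shear

lemma not_solv_toggle_right (hb : ¬ Solv M b) (hker : ∀ k, M *ᵥ k = 0 → (a + b) ⬝ᵥ k = 0)
    (hw : M *ᵥ w = a + b) (hwa : a ⬝ᵥ w = 0) (hwb : b ⬝ᵥ w = 0) :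
    ¬ Solv (M.toggle a b) b := by
  rw [toggle_comm]
  exact not_solv_toggle (fun k hk => add_comm a b ▸ hker k hk) (hw.trans (add_comm a b)) hwb hwa
    hb

end Toggle

section Graph

variable {V : Type*}

lemma nbhdMatrix_isSymm [Fintype V] (G : SimpleGraph V) : (nbhdMatrix G).IsSymm :=
  IsSymm.ext fun u v => by simp only [nbhdMatrix, of_apply, eq_comm, G.adj_comm]

lemma diag_nbhdMatrix [Fintype V] (G : SimpleGraph V) : (nbhdMatrix G).diag = 1 := by
  ext v
  simp [nbhdMatrix]

lemma chi_union_of_disjoint {A B : Set V} (h : Disjoint A B) : chi (A ∪ B) = chi A + chi B := by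
  ext v
  by_cases hA : v ∈ A
  · simp [chi, hA, Set.disjoint_left.1 h hA]
  · simp [chi, hA]

end Graph

/-- Proposition (HO, HO, union NO): the odd dominating patterns of `G*` are exactly the
odd dominating patterns `p` of `G` with `x_{A₁} · p = x_{A₂} · p = 0` together with the
solving patterns `p` of `x̄_{A₁∪A₂}` in `G` with `x_{A₁} · p = x_{A₂} · p = 1`; `A₁`
and `A₂` are HO in `G*`, and `ν(G*) = ν(G)`. -/
theorem stmt19 {V : Type*} [Fintype V] (G : SimpleGraph V) (A₁ A₂ : Set V)
    (hd : Disjoint A₁ A₂)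
    (h1 : HO (nbhdMatrix G) A₁) (h2 : HO (nbhdMatrix G) A₂)
    (h3 : NO (nbhdMatrix G) (A₁ ∪ A₂)) :
    (∀ p : V → ZMod 2, (starMatrix G A₁ A₂).mulVec p = 1 ↔
      (((nbhdMatrix G).mulVec p = 1 ∧ chi A₁ ⬝ᵥ p = 0 ∧ chi A₂ ⬝ᵥ p = 0) ∨
       ((nbhdMatrix G).mulVec p = chi (A₁ ∪ A₂) + 1 ∧
         chi A₁ ⬝ᵥ p = 1 ∧ chi A₂ ⬝ᵥ p = 1))) ∧
    HO (starMatrix G A₁ A₂) A₁ ∧ HO (starMatrix G A₁ A₂) A₂ ∧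
    nullityM (starMatrix G A₁ A₂) = nullityM (nbhdMatrix G) := by
  have hN := nbhdMatrix_isSymm G
  obtain ⟨hab, hNO⟩ := h3
  rw [chi_union_of_disjoint hd] at hab hNO
  obtain ⟨r, hr⟩ := solv_diag hN
  have hone : nbhdMatrix G *ᵥ r = 1 := hr.trans (diag_nbhdMatrix G)
  have hker := (solv_iff_forall_dotProduct_eq_zero hN).1 hab
  have hsum : ∀ p, nbhdMatrix G *ᵥ p = chi A₁ + chi A₂ → (chi A₁ + chi A₂) ⬝ᵥ p = 0 :=
    fun p hp => (dotProduct_eq_of_mulVec_eq_diag hN hp hr).trans (hNO r hone)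
  obtain ⟨k, hk, hak⟩ := exists_mulVec_eq_zero_dotProduct_eq_one hN h1
  obtain ⟨w, hw, hwa, hwb⟩ := exists_mulVec_eq_add_dotProduct_eq_zero hab hk hak hsum
  refine ⟨fun p => ?_, not_solv_toggle hker hw hwa hwb h1,
    not_solv_toggle_right h2 hker hw hwa hwb, nullityM_toggle hker hw hwa hwb h1⟩
  rw [chi_union_of_disjoint hd]
  exact toggle_mulVec_eq_iff ⟨r, hone⟩ h1 h2 p
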